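/- arXiv:2502.08792 — 6 statements merged into one kernel-verified Lean document; each statement's English description precedes it below -/
import Mathlib

section
/- Let F be a CDF on [a,b] with positive density f, let γ ∈ (0,1) and s ∈ (a,b). Define H_G(x) = ∫_a^x t dG(t) − ∫_a^x (1 − G(t)) dt − a for any distribution G. Then for the posterior F_{γ,s} (which equals γF before s and γF + (1−γ) from s onward): H_{F_{γ,s}}(x) = γ·H_F(x) − (1−γ)·x for x < s, and H_{F_{γ,s}}(x) = γ·H_F(x) for x ≥ s. -/
/-!
`G ↦ H_G(x)` is affine along convex combinations of Stieltjes functions: the constant `-a` and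
the `1` in `1 - G` are exactly compensated when the weights sum to one. The posterior is the
convex combination `γ F + (1 - γ) δ_s` with `δ_s` the CDF of the point mass at `s`, and a direct
computation gives `H_{δ_s}(x) = -x` for `x < s` and `0` for `x ≥ s`.
-/

open MeasureTheory

/-- The function `H_G(x) = ∫_a^x t dG(t) − ∫_a^x (1 − G(t)) dt − a`, where the first integral
is a Lebesgue–Stieltjes integral with respect to `G`. -/
noncomputable def Hfun (a : ℝ) (G : StieltjesFunction ℝ) (x : ℝ) : ℝ :=
  (∫ t in Set.Ioc a x, t ∂G.measure) - (∫ t in a..x, (1 - G t)) - a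

open ProbabilityTheory Set NNReal

lemma cdf_dirac_apply (s x : ℝ) : cdf (Measure.dirac s) x = if s ≤ x then 1 else 0 := by
  simp only [cdf_eq_real, Measure.real, Measure.dirac_apply' _ measurableSet_Iic, indicator,
    mem_Iic, Pi.one_apply]
  split_ifs <;> simp

lemma StieltjesFunction.integrableOn_id_Ioc (G : StieltjesFunction ℝ) (a x : ℝ) :
    IntegrableOn (fun t => t) (Ioc a x) G.measure :=
  (continuousOn_id.integrableOn_compact isCompact_Icc).mono_set Ioc_subset_Icc_self

lemma StieltjesFunction.intervalIntegrable_one_sub (G : StieltjesFunction ℝ) (a x : ℝ) :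
    IntervalIntegrable (fun t => 1 - G t) volume a x :=
  intervalIntegrable_const.sub (G.mono.intervalIntegrable)

lemma Hfun_smul_add_smul (a x : ℝ) (F G : StieltjesFunction ℝ) {c d : ℝ≥0} (hcd : c + d = 1) :
    Hfun a (c • F + d • G) x = c * Hfun a F x + d * Hfun a G x := by
  have hcd' : (c : ℝ) + d = 1 := by exact_mod_cast hcd
  have hmix : ∀ t, 1 - (c • F + d • G) t = c * (1 - F t) + d * (1 - G t) := fun t => by
    change 1 - (c * F t + d * G t) = _
    linear_combination -hcd'
  simp only [Hfun, StieltjesFunction.measure_add, StieltjesFunction.measure_smul,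
    Measure.restrict_add, Measure.restrict_smul, hmix]
  rw [integral_add_measure ((F.integrableOn_id_Ioc a x).smul_measure_nnreal)
      ((G.integrableOn_id_Ioc a x).smul_measure_nnreal),
    integral_smul_nnreal_measure, integral_smul_nnreal_measure,
    intervalIntegral.integral_add ((F.intervalIntegrable_one_sub a x).const_mul _)
      ((G.intervalIntegrable_one_sub a x).const_mul _),
    intervalIntegral.integral_const_mul, intervalIntegral.integral_const_mul]
  simp only [NNReal.smul_def, smul_eq_mul]
  linear_combination a * hcd'

lemma integral_one_sub_cdf_dirac {a s : ℝ} (has : a < s) (x : ℝ) :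
    ∫ t in a..x, (1 - cdf (Measure.dirac s) t) = min x s - a := by
  rcases le_or_gt s x with hsx | hxs
  · have hleft : ∫ t in a..s, (1 - cdf (Measure.dirac s) t) = s - a := by
      rw [intervalIntegral.integral_congr_ae (g := fun _ => (1 : ℝ)), intervalIntegral.integral_const]
      · simp
      · filter_upwards [Measure.ae_ne volume s] with t hts ht
        rw [uIoc_of_le has.le] at ht
        simp [cdf_dirac_apply, (lt_of_le_of_ne ht.2 hts).not_ge]
    have hright : ∫ t in s..x, (1 - cdf (Measure.dirac s) t) = 0 := by
      rw [intervalIntegral.integral_congr (g := fun _ => (0 : ℝ)), intervalIntegral.integral_zero]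
      intro t ht
      rw [uIcc_of_le hsx] at ht
      simp [cdf_dirac_apply, ht.1]
    rw [← intervalIntegral.integral_add_adjacent_intervals
      ((cdf _).intervalIntegrable_one_sub a s) ((cdf _).intervalIntegrable_one_sub s x),
      hleft, hright, min_eq_right hsx, add_zero]
  · rw [intervalIntegral.integral_congr (g := fun _ => (1 : ℝ)), intervalIntegral.integral_const,
      min_eq_left hxs.le, smul_eq_mul, mul_one]
    intro t ht
    have hts : t < s := ht.2.trans_lt (max_lt has hxs)
    simp [cdf_dirac_apply, hts.not_ge]

lemma Hfun_cdf_dirac {a s : ℝ} (has : a < s) (x : ℝ) :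
    Hfun a (cdf (Measure.dirac s)) x = if s ≤ x then 0 else -x := by
  have hatom : ∫ t in Ioc a x, t ∂(cdf (Measure.dirac s)).measure = if s ≤ x then s else 0 := by
    rw [measure_cdf, setIntegral_dirac]
    simp [has]
  rw [Hfun, hatom, integral_one_sub_cdf_dirac has]
  split_ifs with hsx
  · rw [min_eq_right hsx]
    ring
  · rw [min_eq_left (le_of_not_ge hsx)]
    ring

theorem H_of_posterior_general (a b γ s : ℝ) (F Fγs : StieltjesFunction ℝ)
    (hγ : γ ∈ Set.Ioo (0:ℝ) 1) (hs : s ∈ Set.Ioo a b)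
    (hpost : ∀ v, Fγs v = γ * F v + (1 - γ) * (if s ≤ v then 1 else 0)) :
    (∀ x ∈ Set.Ico a s, Hfun a Fγs x = γ * Hfun a F x - (1 - γ) * x) ∧
    (∀ x ∈ Set.Icc s b, Hfun a Fγs x = γ * Hfun a F x) := by
  obtain ⟨hγ0, hγ1⟩ := hγ
  have hγ_coe : (γ.toNNReal : ℝ) = γ := Real.coe_toNNReal _ hγ0.le
  have h1γ_coe : ((1 - γ).toNNReal : ℝ) = 1 - γ := Real.coe_toNNReal _ (sub_nonneg.2 hγ1.le)
  have hmix : Fγs = γ.toNNReal • F + (1 - γ).toNNReal • cdf (Measure.dirac s) := by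
    ext v
    change _ = γ.toNNReal * F v + (1 - γ).toNNReal * cdf (Measure.dirac s) v
    rw [hpost, cdf_dirac_apply, hγ_coe, h1γ_coe]
  have hweights : γ.toNNReal + (1 - γ).toNNReal = 1 := by
    rw [← Real.toNNReal_add hγ0.le (sub_nonneg.2 hγ1.le), add_sub_cancel, Real.toNNReal_one]
  have hH : ∀ x, Hfun a Fγs x = γ * Hfun a F x + (1 - γ) * (if s ≤ x then 0 else -x) := by
    intro x
    rw [hmix, Hfun_smul_add_smul a x F _ hweights, Hfun_cdf_dirac hs.1, hγ_coe, h1γ_coe]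
  constructor
  · rintro x ⟨-, hxs⟩
    rw [hH, if_neg hxs.not_ge]
    ring
  · rintro x ⟨hsx, -⟩
    rw [hH, if_pos hsx]
    ring

/-- For the hallucination posterior `F_{γ,s}` (equal to `γF` before `s` and to
`γF + (1−γ)` from `s` onward), `H_{F_{γ,s}}(x) = γ·H_F(x) − (1−γ)·x` for `x < s` and
`H_{F_{γ,s}}(x) = γ·H_F(x)` for `x ≥ s`. -/
theorem H_of_posterior (a b γ s : ℝ) (F Fγs : StieltjesFunction ℝ) (f : ℝ → ℝ)
    (hab : a < b) (hγ : γ ∈ Set.Ioo (0:ℝ) 1) (hs : s ∈ Set.Ioo a b)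
    (hf : ∀ v ∈ Set.Icc a b, 0 < f v)
    (hderiv : ∀ v ∈ Set.Icc a b, HasDerivAt F (f v) v)
    (hpost : ∀ v, Fγs v = γ * F v + (1 - γ) * (if s ≤ v then 1 else 0)) :
    (∀ x ∈ Set.Ico a s, Hfun a Fγs x = γ * Hfun a F x - (1 - γ) * x) ∧
    (∀ x ∈ Set.Icc s b, Hfun a Fγs x = γ * Hfun a F x) :=
  H_of_posterior_general a b γ s F Fγs hγ hs hpost
end

section
/- Let F be a CDF on [a,b] with positive density f and let ℓ_F(x) = x − (1−F(x))/f(x) be non-decreasing (regularity). Fix γ ∈ (0,1), s ∈ (a,b), and for y ≤ s ≤ x define μ_y(x) = γ·α_F(x) + γ·ℓ_F(x)·F(y) − (1−γ)·ℓ_F(x) − γ·H_F(y) + (1−γ)·y, where α_F(x) = H_F(x) − ℓ_F(x)·F(x). Then for fixed x ∈ [s,b], μ_y(x) is strictly increasing in y on [a,s]: if s ≥ y > y' then μ_y(x) > μ_{y'}(x). -/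
/-- `H_F(y) = ∫_a^y t dF(t) − ∫_a^y (1−F(t)) dt − a`, written with the density `f`. -/
noncomputable def HFd (a : ℝ) (F f : ℝ → ℝ) (y : ℝ) : ℝ :=
  (∫ t in a..y, t * f t) - (∫ t in a..y, (1 - F t)) - a

/-- The virtual value `ℓ_F(v) = v − (1−F(v))/f(v)` (ironed = unironed under regularity). -/
noncomputable def ellFd (F f : ℝ → ℝ) (v : ℝ) : ℝ := v - (1 - F v) / f v

/-- `α_F(x) = H_F(x) − ℓ_F(x)·F(x)`. -/
noncomputable def alphaFd (a : ℝ) (F f : ℝ → ℝ) (x : ℝ) : ℝ :=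
  HFd a F f x - ellFd F f x * F x

/-- `μ_y(x) = γ·α_F(x) + γ·ℓ_F(x)·F(y) − (1−γ)·ℓ_F(x) − γ·H_F(y) + (1−γ)·y`. -/
noncomputable def muFd (a γ : ℝ) (F f : ℝ → ℝ) (y x : ℝ) : ℝ :=
  γ * alphaFd a F f x + γ * ellFd F f x * F y - (1 - γ) * ellFd F f x
    - γ * HFd a F f y + (1 - γ) * y

/-- For a regular `F` with positive density, fixed `x ∈ [s,b]`, the map
`y ↦ μ_y(x)` is strictly increasing on `[a,s]`: if `s ≥ y > y'` then `μ_y(x) > μ_{y'}(x)`. -/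
theorem mu_strict_increasing_in_y (a b γ s : ℝ) (F f : ℝ → ℝ)
    (hab : a < b) (hγ : γ ∈ Set.Ioo (0:ℝ) 1) (hs : s ∈ Set.Ioo a b)
    (hf : ∀ v ∈ Set.Icc a b, 0 < f v) (hfc : ContinuousOn f (Set.Icc a b))
    (hderiv : ∀ v ∈ Set.Icc a b, HasDerivAt F (f v) v)
    (hreg : MonotoneOn (ellFd F f) (Set.Icc a b))
    (hFa : F a = 0) (hFb : F b = 1) :
    ∀ x ∈ Set.Icc s b, ∀ y' y : ℝ, a ≤ y' → y' < y → y ≤ s →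
      muFd a γ F f y' x < muFd a γ F f y x := by
  intro x hx y' y hay' hyy' hys
  have hxI : x ∈ Set.Icc a b := ⟨le_trans hs.1.le hx.1, hx.2⟩
  have hyI : y ∈ Set.Icc a b := ⟨le_trans hay' hyy'.le, le_trans hys hs.2.le⟩
  have hy'I : y' ∈ Set.Icc a b := ⟨hay', le_trans hyy'.le hyI.2⟩
  -- continuity of F
  have hFcont : ContinuousOn F (Set.Icc a b) := fun v hv =>
    ((hderiv v hv).continuousAt).continuousWithinAt
  -- the integrand g t = t*f t - (1 - F t)
  have hgcont : ContinuousOn (fun t => t * f t - (1 - F t)) (Set.Icc a b) :=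
    ((continuousOn_id.mul hfc).sub (continuousOn_const.sub hFcont))
  have hsub : ∀ c d : ℝ, c ∈ Set.Icc a b → d ∈ Set.Icc a b →
      Set.uIcc c d ⊆ Set.Icc a b := by
    intro c d hc hd
    exact Set.uIcc_subset_Icc hc hd
  have hgint : ∀ c d : ℝ, c ∈ Set.Icc a b → d ∈ Set.Icc a b →
      IntervalIntegrable (fun t => t * f t - (1 - F t)) MeasureTheory.volume c d := by
    intro c d hc hd
    exact (hgcont.mono (hsub c d hc hd)).intervalIntegrable
  have hfint : ∀ c d : ℝ, c ∈ Set.Icc a b → d ∈ Set.Icc a b →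
      IntervalIntegrable f MeasureTheory.volume c d := by
    intro c d hc hd
    exact (hfc.mono (hsub c d hc hd)).intervalIntegrable
  have haI : a ∈ Set.Icc a b := ⟨le_refl a, hab.le⟩
  -- H_F difference
  have hHdiff : HFd a F f y - HFd a F f y'
      = ∫ t in y'..y, (t * f t - (1 - F t)) := by
    have h1 : IntervalIntegrable (fun t => t * f t) MeasureTheory.volume a y :=
      ((continuousOn_id.mul hfc).mono (hsub a y haI hyI)).intervalIntegrable
    have h1' : IntervalIntegrable (fun t => t * f t) MeasureTheory.volume a y' :=
      ((continuousOn_id.mul hfc).mono (hsub a y' haI hy'I)).intervalIntegrable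
    have h2 : IntervalIntegrable (fun t => 1 - F t) MeasureTheory.volume a y :=
      ((continuousOn_const.sub hFcont).mono (hsub a y haI hyI)).intervalIntegrable
    have h2' : IntervalIntegrable (fun t => 1 - F t) MeasureTheory.volume a y' :=
      ((continuousOn_const.sub hFcont).mono (hsub a y' haI hy'I)).intervalIntegrable
    have e1 : (∫ t in y'..y, t * f t)
        = (∫ t in a..y, t * f t) - ∫ t in a..y', t * f t :=
      (intervalIntegral.integral_interval_sub_left h1 h1').symm
    have e2 : (∫ t in y'..y, (1 - F t))
        = (∫ t in a..y, (1 - F t)) - ∫ t in a..y', (1 - F t) :=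
      (intervalIntegral.integral_interval_sub_left h2 h2').symm
    have e3 : (∫ t in y'..y, (t * f t - (1 - F t)))
        = (∫ t in y'..y, t * f t) - ∫ t in y'..y, (1 - F t) :=
      intervalIntegral.integral_sub
        (((continuousOn_id.mul hfc).mono (hsub y' y hy'I hyI)).intervalIntegrable)
        (((continuousOn_const.sub hFcont).mono (hsub y' y hy'I hyI)).intervalIntegrable)
    rw [e3, e1, e2]; simp [HFd]; ring
  -- F difference as integral of f
  have hFdiff : F y - F y' = ∫ t in y'..y, f t := by
    symm
    apply intervalIntegral.integral_eq_sub_of_hasDerivAt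
    · intro t ht
      exact hderiv t (hsub y' y hy'I hyI ht)
    · exact hfint y' y hy'I hyI
  -- key nonnegativity
  have hkey : 0 ≤ ellFd F f x * (F y - F y') - (HFd a F f y - HFd a F f y') := by
    rw [hFdiff, hHdiff, ← intervalIntegral.integral_const_mul]
    rw [← intervalIntegral.integral_sub
      ((hfint y' y hy'I hyI).const_mul _) (hgint y' y hy'I hyI)]
    apply intervalIntegral.integral_nonneg hyy'.le
    intro t ht
    have htI : t ∈ Set.Icc a b := ⟨le_trans hay' ht.1, le_trans ht.2 hyI.2⟩
    have hft : 0 < f t := hf t htI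
    have hell : ellFd F f t * f t = t * f t - (1 - F t) := by
      unfold ellFd
      field_simp
    have hle : ellFd F f t ≤ ellFd F f x :=
      hreg htI hxI (le_trans ht.2 (le_trans hys hx.1))
    have : (ellFd F f x - ellFd F f t) * f t ≥ 0 :=
      mul_nonneg (by linarith) hft.le
    nlinarith [this, hell]
  have h1γ : 0 < 1 - γ := by linarith [hγ.2]
  have hpos : 0 < (1 - γ) * (y - y') := mul_pos h1γ (by linarith)
  have hγkey : 0 ≤ γ * (ellFd F f x * (F y - F y') - (HFd a F f y - HFd a F f y')) :=
    mul_nonneg hγ.1.le hkey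
  unfold muFd
  nlinarith [hγkey, hpos]
end

section
/- Under the same setup (regular F with positive density f on [a,b], γ ∈ (0,1), s ∈ (a,b)), the function μ_s satisfies μ_s(s) = (1−γ)·(s − ℓ_F(s)) > 0 and μ_s(b) ≤ (1−γ)·(s − b) ≤ 0, where ℓ_F(v) = v − (1−F(v))/f(v). Consequently, by continuity and monotonicity of μ_s, there exists T ∈ (s,b] with μ_s(T) = 0. -/
/-- `μ_s(s) = (1−γ)(s − ℓ_F(s)) > 0` and `μ_s(b) ≤ (1−γ)(s − b) ≤ 0`; hence
there exists `T ∈ (s,b]` with `μ_s(T) = 0`. -/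
theorem mu_sign_change_and_root (a b γ s : ℝ) (F f : ℝ → ℝ)
    (hab : a < b) (hγ : γ ∈ Set.Ioo (0:ℝ) 1) (hs : s ∈ Set.Ioo a b)
    (hf : ∀ v ∈ Set.Icc a b, 0 < f v) (hfc : ContinuousOn f (Set.Icc a b))
    (hderiv : ∀ v ∈ Set.Icc a b, HasDerivAt F (f v) v)
    (hreg : MonotoneOn (ellFd F f) (Set.Icc a b))
    (hFa : F a = 0) (hFb : F b = 1) (hFs : F s < 1) :
    muFd a γ F f s s = (1 - γ) * (s - ellFd F f s) ∧
    0 < muFd a γ F f s s ∧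
    muFd a γ F f s b ≤ (1 - γ) * (s - b) ∧
    (1 - γ) * (s - b) ≤ 0 ∧
    ∃ T ∈ Set.Ioc s b, muFd a γ F f s T = 0 := by
  obtain ⟨hγ0, hγ1⟩ := hγ
  obtain ⟨has, hsb⟩ := hs
  have hsI : s ∈ Set.Icc a b := ⟨has.le, hsb.le⟩
  have hbI : b ∈ Set.Icc a b := ⟨hab.le, le_rfl⟩
  have eq1 : muFd a γ F f s s = (1 - γ) * (s - ellFd F f s) := by
    unfold muFd alphaFd; ring
  have hfs : 0 < f s := hf s hsI
  have hpos : 0 < muFd a γ F f s s := by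
    rw [eq1]
    have : s - ellFd F f s = (1 - F s) / f s := by unfold ellFd; ring
    rw [this]
    exact mul_pos (by linarith) (div_pos (by linarith) hfs)
  -- continuity of F on Icc a b
  have hFcont : ContinuousOn F (Set.Icc a b) := fun v hv =>
    ((hderiv v hv).continuousAt).continuousWithinAt
  -- integrability helpers
  have hint_tf : ∀ x ∈ Set.Icc a b, ∀ y ∈ Set.Icc a b,
      IntervalIntegrable (fun t => t * f t) MeasureTheory.volume x y := by
    intro x hx y hy
    apply ContinuousOn.intervalIntegrable
    apply (continuousOn_id.mul hfc).mono
    exact Set.uIcc_subset_Icc hx hy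
  have hint_F : ∀ x ∈ Set.Icc a b, ∀ y ∈ Set.Icc a b,
      IntervalIntegrable (fun t => 1 - F t) MeasureTheory.volume x y := by
    intro x hx y hy
    apply ContinuousOn.intervalIntegrable
    apply (continuousOn_const.sub hFcont).mono
    exact Set.uIcc_subset_Icc hx hy
  have hint_f : ∀ x ∈ Set.Icc a b, ∀ y ∈ Set.Icc a b,
      IntervalIntegrable f MeasureTheory.volume x y := by
    intro x hx y hy
    exact (hfc.mono (Set.uIcc_subset_Icc hx hy)).intervalIntegrable
  -- FTC: ∫ x..y f = F y - F x  for x,y in Icc a b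
  have hFTC : ∀ x ∈ Set.Icc a b, ∀ y ∈ Set.Icc a b,
      (∫ t in x..y, f t) = F y - F x := by
    intro x hx y hy
    apply intervalIntegral.integral_eq_sub_of_hasDerivAt
    · intro t ht
      exact hderiv t (Set.uIcc_subset_Icc hx hy ht)
    · exact hint_f x hx y hy
  -- F ≤ 1 on Icc a b
  have hFle1 : ∀ t ∈ Set.Icc a b, F t ≤ 1 := by
    intro t ht
    have h1 : (∫ u in t..b, f u) = F b - F t := hFTC t ht b hbI
    have h2 : 0 ≤ ∫ u in t..b, f u := by
      apply intervalIntegral.integral_nonneg ht.2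
      intro u hu
      exact (hf u ⟨le_trans ht.1 hu.1, hu.2⟩).le
    rw [hFb] at h1; linarith
  -- key: HFd b - HFd s ≤ b * (1 - F s)
  have hkey : HFd a F f b - HFd a F f s ≤ b * (1 - F s) := by
    have hsplit1 : (∫ t in a..b, t * f t) - (∫ t in a..s, t * f t)
        = ∫ t in s..b, t * f t := by
      rw [← intervalIntegral.integral_add_adjacent_intervals
        (hint_tf a ⟨le_rfl, hab.le⟩ s hsI) (hint_tf s hsI b hbI)]
      ring
    have hsplit2 : (∫ t in a..b, (1 - F t)) - (∫ t in a..s, (1 - F t))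
        = ∫ t in s..b, (1 - F t) := by
      rw [← intervalIntegral.integral_add_adjacent_intervals
        (hint_F a ⟨le_rfl, hab.le⟩ s hsI) (hint_F s hsI b hbI)]
      ring
    have h1 : (∫ t in s..b, t * f t) ≤ ∫ t in s..b, b * f t := by
      apply intervalIntegral.integral_mono_on hsb.le (hint_tf s hsI b hbI)
      · exact (continuousOn_const.mul (hfc.mono (Set.Icc_subset_Icc has.le le_rfl))).intervalIntegrable_of_Icc hsb.le
      · intro t ht
        have htI : t ∈ Set.Icc a b := ⟨le_trans has.le ht.1, ht.2⟩
        exact mul_le_mul_of_nonneg_right ht.2 (hf t htI).le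
    have h2 : (∫ t in s..b, b * f t) = b * (1 - F s) := by
      rw [intervalIntegral.integral_const_mul, hFTC s hsI b hbI, hFb]
    have h3 : 0 ≤ ∫ t in s..b, (1 - F t) := by
      apply intervalIntegral.integral_nonneg hsb.le
      intro t ht
      have htI : t ∈ Set.Icc a b := ⟨le_trans has.le ht.1, ht.2⟩
      linarith [hFle1 t htI]
    unfold HFd
    linarith
  have hellb : ellFd F f b = b := by
    unfold ellFd; rw [hFb]; simp
  have hmub : muFd a γ F f s b ≤ (1 - γ) * (s - b) := by
    have : muFd a γ F f s b = γ * (HFd a F f b - HFd a F f s)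
        + γ * b * (F s - 1) + (1 - γ) * (s - b) := by
      unfold muFd alphaFd; rw [hellb, hFb]; ring
    rw [this]
    nlinarith [hkey]
  have hneg : (1 - γ) * (s - b) ≤ 0 := by nlinarith
  refine ⟨eq1, hpos, hmub, hneg, ?_⟩
  -- continuity of x ↦ muFd a γ F f s x on Icc a b
  have hHcont : ContinuousOn (HFd a F f) (Set.Icc a b) := by
    have e : Set.Icc a b = Set.uIcc a b := (Set.uIcc_of_le hab.le).symm
    rw [e]
    unfold HFd
    apply ContinuousOn.sub _ continuousOn_const
    apply ContinuousOn.sub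
    · apply intervalIntegral.continuousOn_primitive_interval
      rw [← e]
      exact ((continuousOn_id.mul hfc)).integrableOn_compact isCompact_Icc
    · apply intervalIntegral.continuousOn_primitive_interval
      rw [← e]
      exact ((continuousOn_const.sub hFcont)).integrableOn_compact isCompact_Icc
  have hellcont : ContinuousOn (ellFd F f) (Set.Icc a b) := by
    unfold ellFd
    exact continuousOn_id.sub ((continuousOn_const.sub hFcont).div hfc
      (fun v hv => (hf v hv).ne'))
  have hmucont : ContinuousOn (fun x => muFd a γ F f s x) (Set.Icc a b) := by
    unfold muFd alphaFd
    fun_prop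
  have hmucont' : ContinuousOn (fun x => muFd a γ F f s x) (Set.Icc s b) :=
    hmucont.mono (Set.Icc_subset_Icc has.le le_rfl)
  have hμb0 : muFd a γ F f s b ≤ 0 := le_trans hmub hneg
  have hsub : Set.Icc (muFd a γ F f s b) (muFd a γ F f s s)
      ⊆ (fun x => muFd a γ F f s x) '' Set.Icc s b :=
    intermediate_value_Icc' hsb.le hmucont'
  obtain ⟨T, hT, hT0⟩ := hsub ⟨hμb0, hpos.le⟩
  refine ⟨T, ⟨?_, hT.2⟩, hT0⟩
  rcases lt_or_eq_of_le hT.1 with h | h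
  · exact h
  · exfalso; rw [← h] at hT0; simp at hT0; linarith
end

section
/- Let f be a twice continuously differentiable, strictly positive, log-concave density on (a,b) with CDF F, and fix γ ∈ (0,1). Define φ_{γF}(v) = v − (1/γ − F(v))/f(v). Then the equation φ_{γF}(v) = 0 has at most two distinct solutions in (a,b). -/
/-!
A zero `v` of `φ_{γF}` is a solution of `G(v) = 1/γ` for `G(v) = v f(v) + F(v)`, and it is
positive because `F ≤ 1 < 1/γ`. Between two zeros, Rolle's theorem gives a critical point `c > 0`
of `G`, i.e. `2 f(c) + c f'(c) = 0`, i.e. `(log f)'(c) = -2/c`. Since `(log f)'` is antitone and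
`c ↦ -2/c` is strictly increasing on `(0, ∞)`, there is at most one such `c`, so three zeros are
impossible.
-/

open Set

lemma eq_or_eq_or_eq_of_not_lt_lt {α : Type*} [LinearOrder α] {P : α → Prop}
    (h : ∀ x y z, P x → P y → P z → x < y → y < z → False) {v₁ v₂ v₃ : α}
    (h₁ : P v₁) (h₂ : P v₂) (h₃ : P v₃) : v₁ = v₂ ∨ v₁ = v₃ ∨ v₂ = v₃ := by
  by_contra! hne
  obtain ⟨n₁₂, n₁₃, n₂₃⟩ := hne
  rcases n₁₂.lt_or_gt with h₁₂ | h₁₂ <;> rcases n₁₃.lt_or_gt with h₁₃ | h₁₃ <;>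
    rcases n₂₃.lt_or_gt with h₂₃ | h₂₃
  · exact h _ _ _ h₁ h₂ h₃ h₁₂ h₂₃
  · exact h _ _ _ h₁ h₃ h₂ h₁₃ h₂₃
  · exact absurd (h₁₂.trans h₂₃) h₁₃.not_gt
  · exact h _ _ _ h₃ h₁ h₂ h₁₃ h₁₂
  · exact h _ _ _ h₂ h₁ h₃ h₁₂ h₁₃
  · exact absurd (h₂₃.trans h₁₂) h₁₃.not_gt
  · exact h _ _ _ h₂ h₃ h₁ h₂₃ h₁₃
  · exact h _ _ _ h₃ h₂ h₁ h₂₃ h₁₂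

section Zeros

variable {c w Fw fw : ℝ}

lemma mul_add_eq_of_sub_div_eq_zero (hfw : 0 < fw) (h : w - (c - Fw) / fw = 0) :
    w * fw + Fw = c := by
  rw [sub_eq_zero, eq_div_iff hfw.ne'] at h
  linarith

lemma pos_of_sub_div_eq_zero (hc : 1 < c) (hFw : Fw ≤ 1) (hfw : 0 < fw)
    (h : w - (c - Fw) / fw = 0) : 0 < w := by
  have : 0 < w * fw := by linarith [mul_add_eq_of_sub_div_eq_zero hfw h]
  exact pos_of_mul_pos_left this hfw.le

end Zeros

section Critical

variable {f F f' : ℝ → ℝ} {s : Set ℝ}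

lemma hasDerivAt_id_mul_add {v d : ℝ} (hf : HasDerivAt f d v) (hF : HasDerivAt F (f v) v) :
    HasDerivAt (fun v => v * f v + F v) (2 * f v + v * d) v :=
  (((hasDerivAt_id' v).mul hf).add hF).congr_deriv (by ring)

lemma exists_two_mul_add_mul_deriv_eq_zero {x y : ℝ} (hxy : x < y) (hsub : Icc x y ⊆ s)
    (hf : ∀ v ∈ s, HasDerivAt f (f' v) v) (hF : ∀ v ∈ s, HasDerivAt F (f v) v)
    (hG : x * f x + F x = y * f y + F y) :
    ∃ c ∈ Ioo x y, 2 * f c + c * f' c = 0 := by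
  have hG' : ∀ v ∈ s, HasDerivAt (fun v => v * f v + F v) (2 * f v + v * f' v) v :=
    fun v hv => hasDerivAt_id_mul_add (hf v hv) (hF v hv)
  exact exists_hasDerivAt_eq_zero hxy
    (fun v hv => (hG' v (hsub hv)).continuousAt.continuousWithinAt) hG
    (fun v hv => hG' v (hsub (Ioo_subset_Icc_self hv)))

lemma subsingleton_two_mul_add_mul_deriv_eq_zero_of_concaveOn_log
    (hlc : ConcaveOn ℝ s (fun v => Real.log (f v))) (hfpos : ∀ v ∈ s, 0 < f v)
    (hf : ∀ v ∈ s, HasDerivAt f (f' v) v) :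
    {c ∈ s | 0 < c ∧ 2 * f c + c * f' c = 0}.Subsingleton := by
  have hlog : ∀ v ∈ s, HasDerivAt (fun v => Real.log (f v)) (f' v / f v) v :=
    fun v hv => (hf v hv).log (hfpos v hv).ne'
  have hcrit : ∀ c ∈ s, 0 < c → 2 * f c + c * f' c = 0 →
      deriv (fun v => Real.log (f v)) c = -(2 / c) := by
    intro c hc hc₀ hcrit
    rw [(hlog c hc).deriv, div_eq_iff (hfpos c hc).ne']
    field_simp
    linear_combination hcrit
  have hanti := hlc.antitoneOn_deriv fun v hv => (hlog v hv).differentiableAt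
  intro c₁ ⟨hc₁, pos₁, crit₁⟩ c₂ ⟨hc₂, pos₂, crit₂⟩
  wlog h : c₁ ≤ c₂ generalizing c₁ c₂
  · exact (this hc₂ pos₂ crit₂ hc₁ pos₁ crit₁ (le_of_not_ge h)).symm
  have := hanti hc₁ hc₂ h
  rw [hcrit c₁ hc₁ pos₁ crit₁, hcrit c₂ hc₂ pos₂ crit₂, neg_le_neg_iff,
    div_le_div_iff_of_pos_left two_pos pos₁ pos₂] at this
  exact le_antisymm h this

end Critical

theorem at_most_two_zeros_general (a b γ : ℝ) (F f : ℝ → ℝ)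
    (hγ : γ ∈ Set.Ioo (0:ℝ) 1)
    (hf2 : ContDiffOn ℝ 2 f (Set.Ioo a b))
    (hfpos : ∀ v ∈ Set.Ioo a b, 0 < f v)
    (hlc : ConcaveOn ℝ (Set.Ioo a b) (fun v => Real.log (f v)))
    (hderiv : ∀ v ∈ Set.Ioo a b, HasDerivAt F (f v) v)
    (hF01 : ∀ v ∈ Set.Ioo a b, F v ∈ Set.Icc (0:ℝ) 1) :
    ∀ v₁ ∈ Set.Ioo a b, ∀ v₂ ∈ Set.Ioo a b, ∀ v₃ ∈ Set.Ioo a b,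
      v₁ - (1 / γ - F v₁) / f v₁ = 0 →
      v₂ - (1 / γ - F v₂) / f v₂ = 0 →
      v₃ - (1 / γ - F v₃) / f v₃ = 0 →
      v₁ = v₂ ∨ v₁ = v₃ ∨ v₂ = v₃ := by
  intro v₁ h₁ v₂ h₂ v₃ h₃ e₁ e₂ e₃
  have hγ₁ : 1 < 1 / γ := (one_lt_div hγ.1).2 hγ.2
  have hf : ∀ v ∈ Ioo a b, HasDerivAt f (deriv f v) v := fun v hv =>
    ((hf2.differentiableOn (by norm_num) v hv).differentiableAt (isOpen_Ioo.mem_nhds hv)).hasDerivAt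
  refine eq_or_eq_or_eq_of_not_lt_lt (P := fun v => v ∈ Ioo a b ∧ v - (1 / γ - F v) / f v = 0)
    ?_ ⟨h₁, e₁⟩ ⟨h₂, e₂⟩ ⟨h₃, e₃⟩
  rintro x y z ⟨hx, ex⟩ ⟨hy, ey⟩ ⟨hz, ez⟩ hxy hyz
  have hG : ∀ {w}, w ∈ Ioo a b → w - (1 / γ - F w) / f w = 0 → w * f w + F w = 1 / γ :=
    fun hw ew => mul_add_eq_of_sub_div_eq_zero (hfpos _ hw) ew
  obtain ⟨c₁, hc₁, crit₁⟩ := exists_two_mul_add_mul_deriv_eq_zero hxy (Icc_subset_Ioo hx.1 hy.2)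
    hf hderiv ((hG hx ex).trans (hG hy ey).symm)
  obtain ⟨c₂, hc₂, crit₂⟩ := exists_two_mul_add_mul_deriv_eq_zero hyz (Icc_subset_Ioo hy.1 hz.2)
    hf hderiv ((hG hy ey).trans (hG hz ez).symm)
  have hx₀ : 0 < x := pos_of_sub_div_eq_zero hγ₁ (hF01 x hx).2 (hfpos x hx) ex
  refine (hc₁.2.trans hc₂.1).ne (subsingleton_two_mul_add_mul_deriv_eq_zero_of_concaveOn_log
    hlc hfpos hf ⟨⟨hx.1.trans hc₁.1, hc₁.2.trans hy.2⟩, hx₀.trans hc₁.1, crit₁⟩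
    ⟨⟨hy.1.trans hc₂.1, hc₂.2.trans hz.2⟩, hx₀.trans (hxy.trans hc₂.1), crit₂⟩)

/-- For a `C²`, strictly positive, log-concave density `f` on `(a,b)` with CDF
`F` and `γ ∈ (0,1)`, the equation `φ_{γF}(v) = v − (1/γ − F(v))/f(v) = 0` has at most two
distinct solutions in `(a,b)`. -/
theorem at_most_two_zeros (a b γ : ℝ) (F f : ℝ → ℝ)
    (hab : a < b) (hγ : γ ∈ Set.Ioo (0:ℝ) 1)
    (hf2 : ContDiffOn ℝ 2 f (Set.Ioo a b))
    (hfpos : ∀ v ∈ Set.Ioo a b, 0 < f v)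
    (hlc : ConcaveOn ℝ (Set.Ioo a b) (fun v => Real.log (f v)))
    (hderiv : ∀ v ∈ Set.Ioo a b, HasDerivAt F (f v) v)
    (hF01 : ∀ v ∈ Set.Ioo a b, F v ∈ Set.Icc (0:ℝ) 1) :
    ∀ v₁ ∈ Set.Ioo a b, ∀ v₂ ∈ Set.Ioo a b, ∀ v₃ ∈ Set.Ioo a b,
      v₁ - (1 / γ - F v₁) / f v₁ = 0 →
      v₂ - (1 / γ - F v₂) / f v₂ = 0 →
      v₃ - (1 / γ - F v₃) / f v₃ = 0 →
      v₁ = v₂ ∨ v₁ = v₃ ∨ v₂ = v₃ :=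
  at_most_two_zeros_general a b γ F f hγ hf2 hfpos hlc hderiv hF01
end

section
/- In the two-point value setting above, for any ε ∈ (0,1), the mechanism that always allocates and charges p(1,s) = 1 − ε + 2(1 − w(s)) and p(2,s) = 2 − ε + 2·w(s) (with w as above) satisfies: the interim utilities are U(1;1) = ε, U(1;2) = −3 + ε, U(2;2) = ε, U(2;1) = −1 + ε; hence truthful reporting is incentive compatible and individually rational, and the expected revenue equals α(1−ε) + (1−α)(2−ε) = E[v] − ε. -/
/-- The full-surplus-extraction mechanism. With the two-point value model,
signal probabilities `q₁, q₂`, Crémer–McLean weights `w₁, w₂`, allocation `x ≡ 1`, and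
payments `p(1,s) = 1 − ε + 2(1 − w(s))`, `p(2,s) = 2 − ε + 2w(s)`, the interim utilities are
`U(1;1) = ε`, `U(1;2) = −3 + ε`, `U(2;2) = ε`, `U(2;1) = −1 + ε`; truthful reporting is IC
and IR, and the expected revenue equals `α(1−ε) + (1−α)(2−ε) = E[v] − ε`. -/
theorem full_surplus_mechanism (α γ ε : ℝ)
    (hα : α ∈ Set.Ioo (0:ℝ) 1) (hγ : γ ∈ Set.Ioo (0:ℝ) 1) (hε : ε ∈ Set.Ioo (0:ℝ) 1)
    (q₁ q₂ w₁ w₂ p₁₁ p₁₂ p₂₁ p₂₂ U₁₁ U₁₂ U₂₁ U₂₂ Rev : ℝ)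
    (hq₁ : q₁ = 1 - γ + γ * α) (hq₂ : q₂ = γ * α)
    (hw₁ : w₁ = (1 - q₂) / (1 - γ)) (hw₂ : w₂ = -q₂ / (1 - γ))
    (hp₁₁ : p₁₁ = 1 - ε + 2 * (1 - w₁)) (hp₁₂ : p₁₂ = 1 - ε + 2 * (1 - w₂))
    (hp₂₁ : p₂₁ = 2 - ε + 2 * w₁) (hp₂₂ : p₂₂ = 2 - ε + 2 * w₂)
    (hU₁₁ : U₁₁ = q₁ * (1 - p₁₁) + (1 - q₁) * (1 - p₁₂))
    (hU₁₂ : U₁₂ = q₁ * (1 - p₂₁) + (1 - q₁) * (1 - p₂₂))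
    (hU₂₂ : U₂₂ = q₂ * (2 - p₂₁) + (1 - q₂) * (2 - p₂₂))
    (hU₂₁ : U₂₁ = q₂ * (2 - p₁₁) + (1 - q₂) * (2 - p₁₂))
    (hRev : Rev = α * (q₁ * p₁₁ + (1 - q₁) * p₁₂) + (1 - α) * (q₂ * p₂₁ + (1 - q₂) * p₂₂)) :
    U₁₁ = ε ∧ U₁₂ = -3 + ε ∧ U₂₂ = ε ∧ U₂₁ = -1 + ε ∧
    U₁₂ ≤ U₁₁ ∧ U₂₁ ≤ U₂₂ ∧ 0 ≤ U₁₁ ∧ 0 ≤ U₂₂ ∧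
    Rev = α * (1 - ε) + (1 - α) * (2 - ε) ∧
    Rev = (α * 1 + (1 - α) * 2) - ε := by
  have hγ1 : (1 - γ) ≠ 0 := by nlinarith [hγ.2]
  subst hq₁ hq₂ hw₁ hw₂ hp₁₁ hp₁₂ hp₂₁ hp₂₂ hU₁₁ hU₁₂ hU₂₂ hU₂₁ hRev
  have e1 : (1 - γ + γ * α) * (1 - (1 - ε + 2 * (1 - (1 - γ * α) / (1 - γ)))) +
      (1 - (1 - γ + γ * α)) * (1 - (1 - ε + 2 * (1 - -(γ * α) / (1 - γ)))) = ε := by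
    field_simp; ring
  have e2 : (1 - γ + γ * α) * (1 - (2 - ε + 2 * ((1 - γ * α) / (1 - γ)))) +
      (1 - (1 - γ + γ * α)) * (1 - (2 - ε + 2 * (-(γ * α) / (1 - γ)))) = -3 + ε := by
    field_simp; ring
  have e3 : γ * α * (2 - (2 - ε + 2 * ((1 - γ * α) / (1 - γ)))) +
      (1 - γ * α) * (2 - (2 - ε + 2 * (-(γ * α) / (1 - γ)))) = ε := by
    field_simp; ring
  have e4 : γ * α * (2 - (1 - ε + 2 * (1 - (1 - γ * α) / (1 - γ)))) +
      (1 - γ * α) * (2 - (1 - ε + 2 * (1 - -(γ * α) / (1 - γ)))) = -1 + ε := by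
    field_simp; ring
  have e5 : α * ((1 - γ + γ * α) * (1 - ε + 2 * (1 - (1 - γ * α) / (1 - γ))) +
      (1 - (1 - γ + γ * α)) * (1 - ε + 2 * (1 - -(γ * α) / (1 - γ)))) +
      (1 - α) * (γ * α * (2 - ε + 2 * ((1 - γ * α) / (1 - γ))) +
      (1 - γ * α) * (2 - ε + 2 * (-(γ * α) / (1 - γ)))) = α * (1 - ε) + (1 - α) * (2 - ε) := by
    field_simp; ring
  simp only [neg_div] at *
  refine ⟨e1, e2, e3, e4, by rw [e1, e2]; linarith [hε.2], by rw [e3, e4]; linarith [hε.2],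
    by rw [e1]; exact le_of_lt hε.1, by rw [e3]; exact le_of_lt hε.1, e5, by rw [e5]; ring⟩
end

section
/- Consider two bidders with values drawn i.i.d. from a regular CDF F with continuous density on [a,b], hallucination posterior F_i = F_{γ,s_i}, and let R_i(r) = r·P_{v∼F_i}(v ≥ r) be bidder i's posterior revenue function with monopoly price p_i* satisfying R_i(p_i*) ≥ R_i(r) for all r. Suppose s₁ > s₂, and consider two eager second-price auctions: π_E with reserves (s₁, s₂) and π_C with reserves (max(s₁, p₁*), p₂*). Then conditional on any value v₁ of bidder 1, the expected payment collected from bidder 2 under π_C is at least that under π_E; i.e., E_{v₂}[p₂^{π_C} | v₁] ≥ E_{v₂}[p₂^{π_E} | v₁] for every v₁ ∈ [a,b]. -/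
/-- Bidder 2's posterior revenue function: `R₂(r) = r·P_{v∼F_{γ,s₂}}(v ≥ r)
= r·(1 − γF(r) − (1−γ)𝟙{r > s₂})` (using the left limit of the posterior CDF). -/
noncomputable def R2fun (γ s₂ : ℝ) (F : ℝ → ℝ) (r : ℝ) : ℝ :=
  r * (1 - γ * F r - (1 - γ) * (if s₂ < r then 1 else 0))

/-- Expected payment collected from bidder 2 in the eager second-price auction with reserves
`(r₁, r₂)`, conditional on bidder 1's value `v₁`: if bidder 1 is inactive (`v₁ < r₁`), bidder 2
pays `r₂·𝟙{v₂ ≥ r₂}`, with expectation `R₂(r₂)`; if bidder 1 is active, bidder 2 pays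
`max(r₂,v₁)·𝟙{v₂ ≥ max(r₂,v₁)}`, with expectation `R₂(max(r₂,v₁))`. -/
noncomputable def Epay2 (γ s₂ : ℝ) (F : ℝ → ℝ) (r₁ r₂ v₁ : ℝ) : ℝ :=
  if v₁ < r₁ then R2fun γ s₂ F r₂ else R2fun γ s₂ F (max r₂ v₁)

/-- With `s₁ > s₂` and `p₂*` a monopoly price for bidder 2's posterior
(`R₂(r) ≤ R₂(p₂*)` for all `r ∈ [a,b]`), for every `v₁ ∈ [a,b]` the expected payment from
bidder 2 under the capped auction `π_C` with reserves `(max(s₁,p₁*), p₂*)` is at least that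
under the signal-eager auction `π_E` with reserves `(s₁, s₂)`. -/
theorem capped_beats_signal_eager_bidder2 (a b γ s₁ s₂ p₁ p₂ : ℝ) (F : ℝ → ℝ)
    (hab : a < b) (hγ : γ ∈ Set.Ioo (0:ℝ) 1)
    (hs₁ : s₁ ∈ Set.Icc a b) (hs₂ : s₂ ∈ Set.Icc a b) (hs : s₂ < s₁)
    (hp₁ : p₁ ∈ Set.Icc a b) (hp₂ : p₂ ∈ Set.Icc a b)
    (hFmono : MonotoneOn F (Set.Icc a b)) (hFa : F a = 0) (hFb : F b = 1)
    (hopt : ∀ r ∈ Set.Icc a b, R2fun γ s₂ F r ≤ R2fun γ s₂ F p₂) :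
    ∀ v₁ ∈ Set.Icc a b,
      Epay2 γ s₂ F s₁ s₂ v₁ ≤ Epay2 γ s₂ F (max s₁ p₁) p₂ v₁ := by
  intro v₁ hv₁
  unfold Epay2
  by_cases hC : v₁ < max s₁ p₁
  · simp only [hC, if_true]
    by_cases hE : v₁ < s₁
    · simp only [hE, if_true]
      exact hopt s₂ hs₂
    · simp only [hE, if_false]
      exact hopt (max s₂ v₁) ⟨le_max_of_le_right hv₁.1, max_le hs₂.2 hv₁.2⟩
  · simp only [hC, if_false]
    push_neg at hC
    have hv₁s₁ : s₁ ≤ v₁ := le_trans (le_max_left _ _) hC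
    have hE : ¬ v₁ < s₁ := not_lt.mpr hv₁s₁
    simp only [hE, if_false]
    have h1 : max s₂ v₁ = v₁ := max_eq_right (le_trans hs.le hv₁s₁)
    rw [h1]
    rcases le_total p₂ v₁ with h | h
    · rw [max_eq_right h]
    · rw [max_eq_left h]
      exact hopt v₁ hv₁
end
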